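/- arXiv:2412.06538 — 2 statements merged into one kernel-verified Lean document; each statement's English description precedes it below -/
import Mathlib

section
/- Let θ(t) = ({W_OV(a,z)(t)}, {W_KQ(z)(t)}) be any solution of the gradient flow θ'(t) = −∇L(θ(t)) of the linear-attention cross-entropy loss L. Then for every token z ∈ V the quantity W_KQ(z)(t)² − Σ_{a∈A} W_OV(a,z)(t)² is constant in t along the trajectory. Moreover, the gradient components are given by ∂L/∂W_OV(a,z) = −W_KQ(z)·E_{z_{1:T}}[C(z_{1:T}, z)·(𝟙(a = a*(z_{1:T})) − p̂(a | z_{1:T}))] and ∂L/∂W_KQ(z) = −Σ_{a∈A} W_OV(a,z)·E_{z_{1:T}}[C(z_{1:T}, z)·(𝟙(a = a*(z_{1:T})) − p̂(a | z_{1:T}))], where C(z_{1:T}, z) is the number of tokens in z_{1:T} equal to z and a*(z_{1:T}) = a*(s,r) for the subject s and relation r contained in z_{1:T}. -/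
open MeasureTheory
open scoped RealInnerProductSpace BigOperators

/-- The vocabulary of the synthetic factual recall task: subjects, relations, answers,
noise tokens, and a distinguished EOS token. -/
abbrev Tok (Sub Rel Ans Noi : Type) : Type := Sub ⊕ Rel ⊕ Ans ⊕ Noi ⊕ Unit

variable {Sub Rel Ans Noi : Type}

def Tok.sub (s : Sub) : Tok Sub Rel Ans Noi := Sum.inl s
def Tok.rel (r : Rel) : Tok Sub Rel Ans Noi := Sum.inr (Sum.inl r)
def Tok.ans (a : Ans) : Tok Sub Rel Ans Noi := Sum.inr (Sum.inr (Sum.inl a))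
def Tok.noi (n : Noi) : Tok Sub Rel Ans Noi := Sum.inr (Sum.inr (Sum.inr (Sum.inl n)))
def Tok.eos : Tok Sub Rel Ans Noi := Sum.inr (Sum.inr (Sum.inr (Sum.inr ())))

/-- The (non-factorized, coordinate-wise) parameters of the linear attention model:
the coordinates `Sum.inl (a, z)` are the entries `W_OV(a, z) = φ(a)ᵀ W_OV φ(z)` and the
coordinates `Sum.inr z` are the entries `W_KQ(z) = φ(z)ᵀ W_KQ φ(EOS)` (these coordinates
determine the model since the embeddings are orthonormal).  We endow the parameter space
with the Euclidean (Hilbert) structure, so that gradient flow on these coordinates is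
the gradient flow of the paper. -/
abbrev Param (Sub Rel Ans Noi : Type) : Type :=
  EuclideanSpace ℝ ((Ans × Tok Sub Rel Ans Noi) ⊕ Tok Sub Rel Ans Noi)

def WOV (θ : Param Sub Rel Ans Noi) (a : Ans) (z : Tok Sub Rel Ans Noi) : ℝ :=
  θ (Sum.inl (a, z))

def WKQ (θ : Param Sub Rel Ans Noi) (z : Tok Sub Rel Ans Noi) : ℝ :=
  θ (Sum.inr z)

/-- The first `T` tokens (content tokens and EOS) of a sequence from the data
distribution, 0-indexed by `Fin T`: the subject `s` sits at position `i`, the relation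
`r` at position `j` (with `i ≠ j` among the first `T-1` positions), the remaining
positions among the first `T-1` hold noise tokens, and position `T-1` holds EOS. -/
def seqTok [DecidableEq Sub] [DecidableEq Rel] (T : ℕ) (s : Sub) (r : Rel)
    (i j : Fin (T - 1)) (η : Fin (T - 1) → Noi) (t : Fin T) : Tok Sub Rel Ans Noi :=
  if h : (t : ℕ) < T - 1 then
    if (⟨t, h⟩ : Fin (T - 1)) = i then Tok.sub s
    else if (⟨t, h⟩ : Fin (T - 1)) = j then Tok.rel r
    else Tok.noi (η ⟨t, h⟩)
  else Tok.eos

/-- The logit assigned by the linear attention model to answer `a` on input `z_{1:T}`. -/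
noncomputable def logit {T : ℕ} (θ : Param Sub Rel Ans Noi)
    (zs : Fin T → Tok Sub Rel Ans Noi) (a : Ans) : ℝ :=
  ∑ t : Fin T, WOV θ a (zs t) * WKQ θ (zs t)

/-- The predicted next-token distribution `p̂(a | z_{1:T})` of the linear attention
model (softmax of the logits over the answers). -/
noncomputable def phat [Fintype Ans] {T : ℕ} (θ : Param Sub Rel Ans Noi)
    (zs : Fin T → Tok Sub Rel Ans Noi) (a : Ans) : ℝ :=
  Real.exp (logit θ zs a) / ∑ a' : Ans, Real.exp (logit θ zs a')

/-- The population cross-entropy loss `L(θ) = E_{z_{1:T+1} ∼ D}[-log p̂(z_{T+1} | z_{1:T})]`,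
written as the explicit finite sum over the data distribution: `(s, r)` is drawn with
probability `p s r`, the ordered pair of distinct positions `(i, j)` uniformly among the
`(T-1)(T-2)` possibilities, and the noise tokens i.i.d. uniformly from `Noi`. -/
noncomputable def lossLin [Fintype Sub] [Fintype Rel] [Fintype Ans] [Fintype Noi]
    [DecidableEq Sub] [DecidableEq Rel] (T : ℕ) (p : Sub → Rel → ℝ)
    (astar : Sub → Rel → Ans) (θ : Param Sub Rel Ans Noi) : ℝ :=
  ∑ s : Sub, ∑ r : Rel, ∑ i : Fin (T - 1), ∑ j ∈ Finset.univ \ {i},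
    ∑ η : Fin (T - 1) → Noi,
      (p s r / (((T : ℝ) - 1) * ((T : ℝ) - 2)) *
          (1 / (Fintype.card Noi : ℝ)) ^ (T - 1)) *
        (- Real.log (phat θ (seqTok T s r i j η) (astar s r)))

/-- The expectation `E_{z_{1:T}}[C(z_{1:T}, z) · (𝟙(a = a*(z_{1:T})) - p̂(a | z_{1:T}))]`
appearing in the gradient formulas, where `C(z_{1:T}, z)` is the number of tokens of
`z_{1:T}` equal to `z`. -/
noncomputable def expTerm [Fintype Sub] [Fintype Rel] [Fintype Ans] [Fintype Noi]
    [DecidableEq Sub] [DecidableEq Rel] [DecidableEq Ans] [DecidableEq Noi]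
    (T : ℕ) (p : Sub → Rel → ℝ) (astar : Sub → Rel → Ans) (θ : Param Sub Rel Ans Noi)
    (a : Ans) (z : Tok Sub Rel Ans Noi) : ℝ :=
  ∑ s : Sub, ∑ r : Rel, ∑ i : Fin (T - 1), ∑ j ∈ Finset.univ \ {i},
    ∑ η : Fin (T - 1) → Noi,
      (p s r / (((T : ℝ) - 1) * ((T : ℝ) - 2)) *
          (1 / (Fintype.card Noi : ℝ)) ^ (T - 1)) *
        (((Finset.univ.filter fun t : Fin T => seqTok T s r i j η t = z).card : ℝ) *
          ((if a = astar s r then (1 : ℝ) else 0) - phat θ (seqTok T s r i j η) a))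


set_option synthInstance.maxSize 1000

lemma gradient_coord {ι : Type*} [Fintype ι] [DecidableEq ι]
    {f : EuclideanSpace ℝ ι → ℝ} {D : EuclideanSpace ℝ ι →L[ℝ] ℝ} {x : EuclideanSpace ℝ ι}
    (h : HasFDerivAt f D x) (k : ι) :
    gradient f x k = D (EuclideanSpace.single k 1) := by
  have hg : HasGradientAt f ((InnerProductSpace.toDual ℝ (EuclideanSpace ℝ ι)).symm D) x :=
    h.hasGradientAt
  rw [hg.gradient]
  have h2 : ⟪(InnerProductSpace.toDual ℝ (EuclideanSpace ℝ ι)).symm D,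
      EuclideanSpace.single k 1⟫ = D (EuclideanSpace.single k 1) :=
    InnerProductSpace.toDual_symm_apply
  rw [← h2, EuclideanSpace.inner_single_right]
  simp

section Aux
set_option linter.unusedSectionVars false
variable {Sub Rel Ans Noi : Type} [Fintype Sub] [Fintype Rel] [Fintype Ans] [Fintype Noi]
  [DecidableEq Sub] [DecidableEq Rel] [DecidableEq Ans] [DecidableEq Noi]

noncomputable def Lg (θ : Param Sub Rel Ans Noi) {T : ℕ}
    (zs : Fin T → Tok Sub Rel Ans Noi) (a : Ans) : Param Sub Rel Ans Noi →L[ℝ] ℝ :=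
  ∑ t : Fin T,
    (WOV θ a (zs t) • EuclideanSpace.proj (𝕜 := ℝ)
        (Sum.inr (zs t) : (Ans × Tok Sub Rel Ans Noi) ⊕ Tok Sub Rel Ans Noi)
     + WKQ θ (zs t) • EuclideanSpace.proj (𝕜 := ℝ)
        (Sum.inl (a, zs t) : (Ans × Tok Sub Rel Ans Noi) ⊕ Tok Sub Rel Ans Noi))

lemma hasFDerivAt_logit (θ : Param Sub Rel Ans Noi) {T : ℕ}
    (zs : Fin T → Tok Sub Rel Ans Noi) (a : Ans) :
    HasFDerivAt (fun θ' => logit θ' zs a) (Lg θ zs a) θ := by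
  unfold logit Lg
  refine HasFDerivAt.fun_sum fun t _ => ?_
  have h1 : HasFDerivAt (fun θ' : Param Sub Rel Ans Noi => WOV θ' a (zs t))
      (EuclideanSpace.proj (𝕜 := ℝ)
        (Sum.inl (a, zs t) : (Ans × Tok Sub Rel Ans Noi) ⊕ Tok Sub Rel Ans Noi)) θ :=
    (EuclideanSpace.proj (𝕜 := ℝ)
        (Sum.inl (a, zs t) : (Ans × Tok Sub Rel Ans Noi) ⊕ Tok Sub Rel Ans Noi)).hasFDerivAt
  have h2 : HasFDerivAt (fun θ' : Param Sub Rel Ans Noi => WKQ θ' (zs t))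
      (EuclideanSpace.proj (𝕜 := ℝ)
        (Sum.inr (zs t) : (Ans × Tok Sub Rel Ans Noi) ⊕ Tok Sub Rel Ans Noi)) θ :=
    (EuclideanSpace.proj (𝕜 := ℝ)
        (Sum.inr (zs t) : (Ans × Tok Sub Rel Ans Noi) ⊕ Tok Sub Rel Ans Noi)).hasFDerivAt
  exact h1.mul h2

noncomputable def Ssum (θ : Param Sub Rel Ans Noi) {T : ℕ}
    (zs : Fin T → Tok Sub Rel Ans Noi) : ℝ :=
  ∑ a' : Ans, Real.exp (logit θ zs a')

lemma Ssum_pos [Nonempty Ans] (θ : Param Sub Rel Ans Noi) {T : ℕ}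
    (zs : Fin T → Tok Sub Rel Ans Noi) : 0 < Ssum θ zs :=
  Finset.sum_pos (fun a _ => Real.exp_pos _) Finset.univ_nonempty

lemma nlog_phat_eq [Nonempty Ans] (θ : Param Sub Rel Ans Noi) {T : ℕ}
    (zs : Fin T → Tok Sub Rel Ans Noi) (a₀ : Ans) :
    -Real.log (phat θ zs a₀) = Real.log (Ssum θ zs) - logit θ zs a₀ := by
  have h : (∑ a' : Ans, Real.exp (logit θ zs a')) ≠ 0 := (Ssum_pos θ zs).ne'
  rw [phat, Real.log_div (Real.exp_ne_zero _) h, Real.log_exp, Ssum]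
  ring

noncomputable def Dnl (θ : Param Sub Rel Ans Noi) {T : ℕ}
    (zs : Fin T → Tok Sub Rel Ans Noi) (a₀ : Ans) : Param Sub Rel Ans Noi →L[ℝ] ℝ :=
  (Ssum θ zs)⁻¹ • (∑ a : Ans, Real.exp (logit θ zs a) • Lg θ zs a) - Lg θ zs a₀

lemma hasFDerivAt_nlog [Nonempty Ans] (θ : Param Sub Rel Ans Noi) {T : ℕ}
    (zs : Fin T → Tok Sub Rel Ans Noi) (a₀ : Ans) :
    HasFDerivAt (fun θ' => -Real.log (phat θ' zs a₀)) (Dnl θ zs a₀) θ := by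
  have hS : HasFDerivAt (fun θ' => Ssum θ' zs)
      (∑ a : Ans, Real.exp (logit θ zs a) • Lg θ zs a) θ :=
    HasFDerivAt.fun_sum fun a _ => (hasFDerivAt_logit θ zs a).exp
  have h := (hS.log (Ssum_pos θ zs).ne').sub (hasFDerivAt_logit θ zs a₀)
  exact h.congr_of_eventuallyEq
    (Filter.Eventually.of_forall fun θ' => (nlog_phat_eq θ' zs a₀))

noncomputable def Dloss [Nonempty Ans] (T : ℕ) (p : Sub → Rel → ℝ)
    (astar : Sub → Rel → Ans) (θ : Param Sub Rel Ans Noi) :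
    Param Sub Rel Ans Noi →L[ℝ] ℝ :=
  ∑ s : Sub, ∑ r : Rel, ∑ i : Fin (T - 1), ∑ j ∈ Finset.univ \ {i},
    ∑ η : Fin (T - 1) → Noi,
      (p s r / (((T : ℝ) - 1) * ((T : ℝ) - 2)) *
          (1 / (Fintype.card Noi : ℝ)) ^ (T - 1)) •
        Dnl θ (seqTok T s r i j η) (astar s r)

lemma hasFDerivAt_loss [Nonempty Ans] (T : ℕ) (p : Sub → Rel → ℝ)
    (astar : Sub → Rel → Ans) (θ : Param Sub Rel Ans Noi) :
    HasFDerivAt (lossLin T p astar) (Dloss T p astar θ) θ := by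
  unfold lossLin Dloss
  exact HasFDerivAt.fun_sum fun s _ => HasFDerivAt.fun_sum fun r _ => HasFDerivAt.fun_sum fun i _ =>
    HasFDerivAt.fun_sum fun j _ => HasFDerivAt.fun_sum fun η _ =>
      (hasFDerivAt_nlog θ (seqTok T s r i j η) (astar s r)).const_mul _

lemma sum_ite_count {T : ℕ} (zs : Fin T → Tok Sub Rel Ans Noi)
    (z : Tok Sub Rel Ans Noi) (g : Tok Sub Rel Ans Noi → ℝ) :
    (∑ t : Fin T, if zs t = z then g (zs t) else 0) =
      ((Finset.univ.filter fun t : Fin T => zs t = z).card : ℝ) * g z := by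
  rw [← Finset.sum_filter,
    Finset.sum_congr rfl (fun t ht => by rw [(Finset.mem_filter.mp ht).2]),
    Finset.sum_const, nsmul_eq_mul]

lemma Lg_apply_inl (θ : Param Sub Rel Ans Noi) {T : ℕ}
    (zs : Fin T → Tok Sub Rel Ans Noi) (a a' : Ans) (z : Tok Sub Rel Ans Noi) :
    Lg θ zs a (EuclideanSpace.single (Sum.inl (a', z)) 1) =
      if a = a' then
        ((Finset.univ.filter fun t : Fin T => zs t = z).card : ℝ) * WKQ θ z
      else 0 := by
  have : Lg θ zs a (EuclideanSpace.single (Sum.inl (a', z)) 1) =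
      ∑ t : Fin T, WKQ θ (zs t) * (if a = a' ∧ zs t = z then 1 else 0) := by
    unfold Lg
    simp only [ContinuousLinearMap.sum_apply, ContinuousLinearMap.add_apply,
      ContinuousLinearMap.coe_smul', Pi.smul_apply, smul_eq_mul, PiLp.proj_apply,
      EuclideanSpace.single_apply]
    refine Finset.sum_congr rfl fun t _ => ?_
    rw [if_neg (by simp : ¬(Sum.inr (zs t) :
        (Ans × Tok Sub Rel Ans Noi) ⊕ Tok Sub Rel Ans Noi) = Sum.inl (a', z)),
      mul_zero, zero_add]
    simp only [Sum.inl.injEq, Prod.mk.injEq]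
  rw [this]
  by_cases h : a = a'
  · simp only [h, true_and, if_true, mul_ite, mul_one, mul_zero]
    have := sum_ite_count zs z (WKQ θ)
    rw [Finset.sum_congr rfl (fun t _ => ?_), this, mul_comm]
    by_cases h2 : zs t = z <;> simp [h2]
  · simp [h]

lemma Lg_apply_inr (θ : Param Sub Rel Ans Noi) {T : ℕ}
    (zs : Fin T → Tok Sub Rel Ans Noi) (a : Ans) (z : Tok Sub Rel Ans Noi) :
    Lg θ zs a (EuclideanSpace.single (Sum.inr z) 1) =
      ((Finset.univ.filter fun t : Fin T => zs t = z).card : ℝ) * WOV θ a z := by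
  have : Lg θ zs a (EuclideanSpace.single (Sum.inr z) 1) =
      ∑ t : Fin T, if zs t = z then WOV θ a (zs t) else 0 := by
    unfold Lg
    simp only [ContinuousLinearMap.sum_apply, ContinuousLinearMap.add_apply,
      ContinuousLinearMap.coe_smul', Pi.smul_apply, smul_eq_mul, PiLp.proj_apply,
      EuclideanSpace.single_apply]
    refine Finset.sum_congr rfl fun t _ => ?_
    simp only [Sum.inr.injEq, Sum.inl.injEq, reduceCtorEq, if_false, mul_zero, add_zero]
    by_cases h2 : zs t = z <;> simp [h2]
  rw [this, sum_ite_count zs z (fun w => WOV θ a w)]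

lemma sum_swap_ans {T : ℕ}
    (f : Ans → Sub → Rel → Fin (T-1) → Fin (T-1) → ((Fin (T-1)) → Noi) → ℝ) :
    (∑ a' : Ans, ∑ s : Sub, ∑ r : Rel, ∑ i : Fin (T-1), ∑ j ∈ Finset.univ \ {i},
        ∑ η : Fin (T-1) → Noi, f a' s r i j η) =
      ∑ s : Sub, ∑ r : Rel, ∑ i : Fin (T-1), ∑ j ∈ Finset.univ \ {i},
        ∑ η : Fin (T-1) → Noi, ∑ a' : Ans, f a' s r i j η := by
  rw [Finset.sum_comm]
  refine Finset.sum_congr rfl fun s _ => ?_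
  rw [Finset.sum_comm]
  refine Finset.sum_congr rfl fun r _ => ?_
  rw [Finset.sum_comm]
  refine Finset.sum_congr rfl fun i _ => ?_
  rw [Finset.sum_comm]
  refine Finset.sum_congr rfl fun j _ => ?_
  rw [Finset.sum_comm]

lemma aux_alg {A : Type*} [Fintype A] [DecidableEq A] (c C Sinv : ℝ) (e V : A → ℝ)
    (a₀ : A) :
    c * ((∑ x : A, Sinv * (e x * (C * V x))) - C * V a₀) =
      ∑ x : A, -(V x * (c * (C * ((if x = a₀ then (1:ℝ) else 0) - e x * Sinv)))) := by
  have h : ∀ x ∈ (Finset.univ : Finset A),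
      -(V x * (c * (C * ((if x = a₀ then (1:ℝ) else 0) - e x * Sinv)))) =
        c * (Sinv * (e x * (C * V x))) - (if x = a₀ then c * (C * V x) else 0) := by
    intro x _
    rcases eq_or_ne x a₀ with h|h
    · simp only [if_pos h]; ring
    · simp only [if_neg h]; ring
  rw [Finset.sum_congr rfl h, Finset.sum_sub_distrib, ← Finset.mul_sum]
  simp only [Finset.sum_ite_eq', Finset.mem_univ, if_true]
  rw [mul_sub]
  congr 1
  rw [Finset.mul_sum, Finset.mul_sum]

lemma grad_loss_inl [Nonempty Ans] (T : ℕ) (p : Sub → Rel → ℝ) (astar : Sub → Rel → Ans)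
    (θ : Param Sub Rel Ans Noi) (a : Ans) (z : Tok Sub Rel Ans Noi) :
    gradient (lossLin T p astar) θ (Sum.inl (a, z)) =
      -(WKQ θ z * expTerm T p astar θ a z) := by
  rw [gradient_coord (hasFDerivAt_loss T p astar θ)]
  simp only [Dloss, Dnl, ContinuousLinearMap.sum_apply, ContinuousLinearMap.coe_smul',
    Pi.smul_apply, ContinuousLinearMap.sub_apply, smul_eq_mul, Lg_apply_inl,
    mul_ite, mul_zero, Finset.sum_ite_eq', Finset.mem_univ, if_true]
  simp only [expTerm, phat, Ssum, Finset.mul_sum, ← Finset.sum_neg_distrib,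
    div_eq_mul_inv]
  refine Finset.sum_congr rfl fun s _ => Finset.sum_congr rfl fun r _ =>
    Finset.sum_congr rfl fun i _ => Finset.sum_congr rfl fun j _ =>
    Finset.sum_congr rfl fun η _ => ?_
  rcases eq_or_ne a (astar s r) with h|h
  · simp only [h, if_pos rfl, eq_self_iff_true, if_true]
    ring
  · simp only [if_neg h, if_neg (Ne.symm h)]
    ring

lemma grad_loss_inr [Nonempty Ans] (T : ℕ) (p : Sub → Rel → ℝ) (astar : Sub → Rel → Ans)
    (θ : Param Sub Rel Ans Noi) (z : Tok Sub Rel Ans Noi) :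
    gradient (lossLin T p astar) θ (Sum.inr z) =
      -(∑ a' : Ans, WOV θ a' z * expTerm T p astar θ a' z) := by
  rw [gradient_coord (hasFDerivAt_loss T p astar θ)]
  simp only [Dloss, Dnl, ContinuousLinearMap.sum_apply, ContinuousLinearMap.coe_smul',
    Pi.smul_apply, ContinuousLinearMap.sub_apply, smul_eq_mul, Lg_apply_inr]
  simp only [expTerm, phat, Ssum, Finset.mul_sum, div_eq_mul_inv]
  rw [sum_swap_ans]
  simp only [← Finset.sum_neg_distrib]
  refine Finset.sum_congr rfl fun s _ => Finset.sum_congr rfl fun r _ =>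
    Finset.sum_congr rfl fun i _ => Finset.sum_congr rfl fun j _ =>
    Finset.sum_congr rfl fun η _ => ?_
  exact aux_alg _ _ _ _ _ _

end Aux


theorem balancedness_and_gradient_formulas
    (Sub Rel Ans Noi : Type) [Fintype Sub] [Fintype Rel] [Fintype Ans] [Fintype Noi]
    [DecidableEq Sub] [DecidableEq Rel] [DecidableEq Ans] [DecidableEq Noi]
    (T : ℕ) (p : Sub → Rel → ℝ) (astar : Sub → Rel → Ans)
    (hp0 : ∀ s r, 0 ≤ p s r) (hp1 : (∑ s : Sub, ∑ r : Rel, p s r) = 1)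
    (hdisj : ∀ r r' : Rel, r ≠ r' →
      Disjoint (Finset.univ.image fun s => astar s r)
        (Finset.univ.image fun s => astar s r'))
    (θfun : ℝ → Param Sub Rel Ans Noi)
    (hflow : ∀ t : ℝ,
      HasDerivAt θfun (-(gradient (lossLin T p astar) (θfun t))) t) :
    (∀ (z : Tok Sub Rel Ans Noi) (t₁ t₂ : ℝ),
        WKQ (θfun t₁) z ^ 2 - ∑ a : Ans, WOV (θfun t₁) a z ^ 2 =
        WKQ (θfun t₂) z ^ 2 - ∑ a : Ans, WOV (θfun t₂) a z ^ 2) ∧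
    (∀ (θ : Param Sub Rel Ans Noi) (a : Ans) (z : Tok Sub Rel Ans Noi),
        gradient (lossLin T p astar) θ (Sum.inl (a, z)) =
          -(WKQ θ z * expTerm T p astar θ a z) ∧
        gradient (lossLin T p astar) θ (Sum.inr z) =
          -(∑ a' : Ans, WOV θ a' z * expTerm T p astar θ a' z)) := by
  rcases isEmpty_or_nonempty Ans with hE | hN
  · -- degenerate case: no answers, the loss is identically zero
    have hL : lossLin T p astar = fun _ : Param Sub Rel Ans Noi => (0:ℝ) := by
      funext θ
      exact Finset.sum_eq_zero fun s _ => Finset.sum_eq_zero fun r _ =>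
        (hE.false (astar s r)).elim
    have hgrad0 : ∀ x : Param Sub Rel Ans Noi,
        gradient (lossLin T p astar) x = 0 := by
      intro x; rw [hL]; exact gradient_const _ _
    constructor
    · intro z t₁ t₂
      have hconst : ∀ u : ℝ, HasDerivAt (fun v => WKQ (θfun v) z) 0 u := by
        intro u
        have h1 : HasDerivAt (fun v => WKQ (θfun v) z)
            (EuclideanSpace.proj (𝕜 := ℝ)
              (Sum.inr z : (Ans × Tok Sub Rel Ans Noi) ⊕ Tok Sub Rel Ans Noi)
              (-(gradient (lossLin T p astar) (θfun u)))) u :=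
          (EuclideanSpace.proj (𝕜 := ℝ)
            (Sum.inr z : (Ans × Tok Sub Rel Ans Noi) ⊕ Tok Sub Rel Ans Noi)
            ).hasFDerivAt.comp_hasDerivAt u (hflow u)
        simpa [hgrad0] using h1
      have hW : WKQ (θfun t₁) z = WKQ (θfun t₂) z :=
        is_const_of_deriv_eq_zero
          (fun u => (hconst u).differentiableAt)
          (fun u => (hconst u).deriv) t₁ t₂
      simp [hW]
    · intro θ a z
      exact (hE.false a).elim
  · constructor
    · intro z t₁ t₂
      have key : ∀ u : ℝ, HasDerivAt
          (fun v => WKQ (θfun v) z ^ 2 - ∑ a : Ans, WOV (θfun v) a z ^ 2) 0 u := by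
        intro u
        have hKQ : HasDerivAt (fun v => WKQ (θfun v) z)
            (∑ a : Ans, WOV (θfun u) a z * expTerm T p astar (θfun u) a z) u := by
          have h1 : HasDerivAt (fun v => WKQ (θfun v) z)
              (EuclideanSpace.proj (𝕜 := ℝ)
                (Sum.inr z : (Ans × Tok Sub Rel Ans Noi) ⊕ Tok Sub Rel Ans Noi)
                (-(gradient (lossLin T p astar) (θfun u)))) u :=
            (EuclideanSpace.proj (𝕜 := ℝ)
              (Sum.inr z : (Ans × Tok Sub Rel Ans Noi) ⊕ Tok Sub Rel Ans Noi)
              ).hasFDerivAt.comp_hasDerivAt u (hflow u)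
          have h2 : EuclideanSpace.proj (𝕜 := ℝ)
              (Sum.inr z : (Ans × Tok Sub Rel Ans Noi) ⊕ Tok Sub Rel Ans Noi)
              (-(gradient (lossLin T p astar) (θfun u))) =
              ∑ a : Ans, WOV (θfun u) a z * expTerm T p astar (θfun u) a z := by
            have h3 : (-(gradient (lossLin T p astar) (θfun u)))
                (Sum.inr z : (Ans × Tok Sub Rel Ans Noi) ⊕ Tok Sub Rel Ans Noi) =
                -((gradient (lossLin T p astar) (θfun u)) (Sum.inr z)) := rfl
            rw [PiLp.proj_apply, h3, grad_loss_inr T p astar (θfun u) z, neg_neg]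
          rw [h2] at h1
          exact h1
        have hOV : ∀ a : Ans, HasDerivAt (fun v => WOV (θfun v) a z)
            (WKQ (θfun u) z * expTerm T p astar (θfun u) a z) u := by
          intro a
          have h1 : HasDerivAt (fun v => WOV (θfun v) a z)
              (EuclideanSpace.proj (𝕜 := ℝ)
                (Sum.inl (a, z) : (Ans × Tok Sub Rel Ans Noi) ⊕ Tok Sub Rel Ans Noi)
                (-(gradient (lossLin T p astar) (θfun u)))) u :=
            (EuclideanSpace.proj (𝕜 := ℝ)
              (Sum.inl (a, z) : (Ans × Tok Sub Rel Ans Noi) ⊕ Tok Sub Rel Ans Noi)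
              ).hasFDerivAt.comp_hasDerivAt u (hflow u)
          have h2 : EuclideanSpace.proj (𝕜 := ℝ)
              (Sum.inl (a, z) : (Ans × Tok Sub Rel Ans Noi) ⊕ Tok Sub Rel Ans Noi)
              (-(gradient (lossLin T p astar) (θfun u))) =
              WKQ (θfun u) z * expTerm T p astar (θfun u) a z := by
            have h3 : (-(gradient (lossLin T p astar) (θfun u)))
                (Sum.inl (a, z) : (Ans × Tok Sub Rel Ans Noi) ⊕ Tok Sub Rel Ans Noi) =
                -((gradient (lossLin T p astar) (θfun u)) (Sum.inl (a, z))) := rfl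
            rw [PiLp.proj_apply, h3, grad_loss_inl T p astar (θfun u) a z, neg_neg]
          rw [h2] at h1
          exact h1
        have hsq := (hKQ.pow 2).sub (HasDerivAt.fun_sum
          (fun a (_ : a ∈ (Finset.univ : Finset Ans)) => (hOV a).pow 2))
        have hzero : ((2:ℕ) : ℝ) * WKQ (θfun u) z ^ (2-1) *
              (∑ a : Ans, WOV (θfun u) a z * expTerm T p astar (θfun u) a z) -
            (∑ a : Ans, ((2:ℕ) : ℝ) * WOV (θfun u) a z ^ (2-1) *
              (WKQ (θfun u) z * expTerm T p astar (θfun u) a z)) = 0 := by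
          rw [Finset.mul_sum, ← Finset.sum_sub_distrib]
          exact Finset.sum_eq_zero fun a _ => by ring
        rw [hzero] at hsq
        exact hsq
      exact is_const_of_deriv_eq_zero
        (fun u => (key u).differentiableAt)
        (fun u => (key u).deriv) t₁ t₂
    · intro θ a z
      exact ⟨grad_loss_inl T p astar θ a z, grad_loss_inr T p astar θ z⟩
end

section
/- Let α > 0 and let θ(t) be the solution of the gradient flow θ'(t) = −∇L(θ(t)) of the linear-attention cross-entropy loss L started from the balanced initialization W_OV(a,z)(0) = α for all a ∈ A, z ∈ V and W_KQ(z)(0) = α·√(|A|+1) for all z ∈ V. Then W_KQ(z)(t) ≥ α for every z ∈ V and every t ≥ 0. -/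
open MeasureTheory
open scoped RealInnerProductSpace BigOperators

variable {Sub Rel Ans Noi : Type}

set_option linter.unusedSectionVars false
set_option synthInstance.maxSize 1000
set_option maxHeartbeats 1000000

section AuxGF
variable {Sub Rel Ans Noi : Type} [Fintype Sub] [Fintype Rel] [Fintype Ans] [Fintype Noi]
  [DecidableEq Sub] [DecidableEq Rel] [DecidableEq Ans] [DecidableEq Noi]

/-- The loss as a function of the products `w(a,z) = W_OV(a,z) W_KQ(z)`. -/
noncomputable def Gloss (T : ℕ) (p : Sub → Rel → ℝ) (astar : Sub → Rel → Ans)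
    (w : Ans × Tok Sub Rel Ans Noi → ℝ) : ℝ :=
  ∑ s : Sub, ∑ r : Rel, ∑ i : Fin (T - 1), ∑ j ∈ Finset.univ \ {i},
    ∑ η : Fin (T - 1) → Noi,
      (p s r / (((T : ℝ) - 1) * ((T : ℝ) - 2)) *
          (1 / (Fintype.card Noi : ℝ)) ^ (T - 1)) *
        (- Real.log (Real.exp (∑ t : Fin T, w (astar s r, seqTok T s r i j η t)) /
            ∑ a' : Ans, Real.exp (∑ t : Fin T, w (a', seqTok T s r i j η t))))

def uMap (θ : Param Sub Rel Ans Noi) : Ans × Tok Sub Rel Ans Noi → ℝ :=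
  fun az => θ (Sum.inl az) * θ (Sum.inr az.2)

lemma lossLin_eq_Gloss (T : ℕ) (p : Sub → Rel → ℝ) (astar : Sub → Rel → Ans)
    (θ : Param Sub Rel Ans Noi) :
    lossLin T p astar θ = Gloss T p astar (uMap θ) := rfl

lemma differentiable_Gloss [Nonempty Ans] (T : ℕ) (p : Sub → Rel → ℝ)
    (astar : Sub → Rel → Ans) :
    Differentiable ℝ (Gloss (Noi := Noi) T p astar) := by
  unfold Gloss
  apply Differentiable.fun_sum; intro s _
  apply Differentiable.fun_sum; intro r _
  apply Differentiable.fun_sum; intro i _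
  apply Differentiable.fun_sum; intro j _
  apply Differentiable.fun_sum; intro η _
  apply Differentiable.const_mul
  apply Differentiable.neg
  have hℓ : ∀ a : Ans, Differentiable ℝ
      (fun w : Ans × Tok Sub Rel Ans Noi → ℝ => ∑ t : Fin T, w (a, seqTok T s r i j η t)) := by
    intro a
    apply Differentiable.fun_sum; intro t _
    exact (ContinuousLinearMap.proj (R := ℝ)
      (φ := fun _ : Ans × Tok Sub Rel Ans Noi => ℝ) (a, seqTok T s r i j η t)).differentiable
  have hden : ∀ w : Ans × Tok Sub Rel Ans Noi → ℝ,
      0 < ∑ a' : Ans, Real.exp (∑ t : Fin T, w (a', seqTok T s r i j η t)) := by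
    intro w
    exact Finset.sum_pos (fun a _ => Real.exp_pos _) Finset.univ_nonempty
  apply Differentiable.log
  · have hS : Differentiable ℝ (fun w : Ans × Tok Sub Rel Ans Noi → ℝ =>
        ∑ a' : Ans, Real.exp (∑ t : Fin T, w (a', seqTok T s r i j η t))) :=
      Differentiable.fun_sum fun a _ => (hℓ a).exp
    have := ((hℓ (astar s r)).exp).mul (hS.inv fun w => (hden w).ne')
    simp only [div_eq_mul_inv] at this ⊢; exact this
  · intro w
    exact (div_pos (Real.exp_pos _) (hden w)).ne'

end AuxGF

section AuxGF2
variable {Sub Rel Ans Noi : Type} [Fintype Sub] [Fintype Rel] [Fintype Ans] [Fintype Noi]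
  [DecidableEq Sub] [DecidableEq Rel] [DecidableEq Ans] [DecidableEq Noi]

lemma gradient_coord_s10 (f : Param Sub Rel Ans Noi → ℝ) (θ : Param Sub Rel Ans Noi)
    (i : (Ans × Tok Sub Rel Ans Noi) ⊕ Tok Sub Rel Ans Noi) :
    gradient f θ i = fderiv ℝ f θ (EuclideanSpace.single i 1) := by
  have h : ⟪gradient f θ, EuclideanSpace.single i 1⟫ =
      fderiv ℝ f θ (EuclideanSpace.single i 1) := by
    rw [gradient]; exact InnerProductSpace.toDual_symm_apply
  rw [EuclideanSpace.inner_single_right] at h; simpa using h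

lemma hasDerivAt_line_comp {E : Type*} [NormedAddCommGroup E] [NormedSpace ℝ E]
    (f : E → ℝ) (θ e : E) (hf : DifferentiableAt ℝ f θ) :
    HasDerivAt (fun h : ℝ => f (θ + h • e)) (fderiv ℝ f θ e) 0 := by
  have hline : HasDerivAt (fun h : ℝ => θ + h • e) e 0 := by
    simpa using ((hasDerivAt_id (0 : ℝ)).smul_const e).const_add θ
  have hfd : HasFDerivAt f (fderiv ℝ f θ) ((fun h : ℝ => θ + h • e) 0) := by
    simpa using hf.hasFDerivAt
  exact hfd.comp_hasDerivAt 0 hline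

example (i : (Ans × Tok Sub Rel Ans Noi) ⊕ Tok Sub Rel Ans Noi) :
    Differentiable ℝ (fun θ : Param Sub Rel Ans Noi => θ i) :=
  (EuclideanSpace.proj (𝕜 := ℝ) i).differentiable

end AuxGF2

section AuxGF3
variable {Sub Rel Ans Noi : Type} [Fintype Sub] [Fintype Rel] [Fintype Ans] [Fintype Noi]
  [DecidableEq Sub] [DecidableEq Rel] [DecidableEq Ans] [DecidableEq Noi]

/-- Indicator vector in product-coordinate space. -/
def psing (az : Ans × Tok Sub Rel Ans Noi) : Ans × Tok Sub Rel Ans Noi → ℝ :=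
  Pi.single az 1

lemma grad_struct [Nonempty Sub] [Nonempty Rel]
    (T : ℕ) (p : Sub → Rel → ℝ) (astar : Sub → Rel → Ans)
    (θ : Param Sub Rel Ans Noi) :
    ∃ g : Ans × Tok Sub Rel Ans Noi → ℝ,
      (∀ (a : Ans) (z : Tok Sub Rel Ans Noi),
        gradient (lossLin T p astar) θ (Sum.inl (a, z)) = θ (Sum.inr z) * g (a, z)) ∧
      (∀ z : Tok Sub Rel Ans Noi,
        gradient (lossLin T p astar) θ (Sum.inr z) =
          ∑ a : Ans, θ (Sum.inl (a, z)) * g (a, z)) := by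
  haveI : Nonempty Ans := ⟨astar (Classical.arbitrary Sub) (Classical.arbitrary Rel)⟩
  have hLdiff : Differentiable ℝ (Gloss (Noi := Noi) T p astar) :=
    differentiable_Gloss T p astar
  have huMap : Differentiable ℝ (uMap (Sub := Sub) (Rel := Rel) (Ans := Ans) (Noi := Noi)) := by
    rw [differentiable_pi]
    intro az
    have h1 : Differentiable ℝ (fun θ' : Param Sub Rel Ans Noi => θ' (Sum.inl az)) :=
      (EuclideanSpace.proj (𝕜 := ℝ) (Sum.inl az)).differentiable
    have h2 : Differentiable ℝ (fun θ' : Param Sub Rel Ans Noi => θ' (Sum.inr az.2)) :=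
      (EuclideanSpace.proj (𝕜 := ℝ) (Sum.inr az.2)).differentiable
    exact h1.mul h2
  have hFeq : lossLin (Noi := Noi) T p astar = fun θ' => Gloss T p astar (uMap θ') :=
    funext fun θ' => lossLin_eq_Gloss T p astar θ'
  have hF : Differentiable ℝ (lossLin (Noi := Noi) T p astar) := by
    rw [hFeq]; exact hLdiff.comp huMap
  set DL := fderiv ℝ (Gloss (Noi := Noi) T p astar) (uMap θ) with hDL
  refine ⟨fun az => DL (psing az), ?_, ?_⟩
  · intro a z
    rw [gradient_coord_s10]
    have hA := hasDerivAt_line_comp (lossLin T p astar) θ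
      (EuclideanSpace.single (Sum.inl (a, z)) 1) (hF θ)
    have hEq : ∀ h : ℝ,
        uMap (θ + h • EuclideanSpace.single (Sum.inl (a, z)) 1) =
          uMap θ + (h * θ (Sum.inr z)) • psing (a, z) := by
      intro h; funext az'
      obtain ⟨a', z'⟩ := az'
      simp only [uMap, PiLp.add_apply, PiLp.smul_apply, EuclideanSpace.single_apply,
        smul_eq_mul, Pi.add_apply, Pi.smul_apply, psing, Pi.single_apply, Sum.inl.injEq,
        reduceCtorEq, if_false, Prod.mk.injEq]
      by_cases hc : a' = a ∧ z' = z
      · obtain ⟨rfl, rfl⟩ := hc; simp; ring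
      · simp [hc]
    have hline2 : HasDerivAt
        (fun h : ℝ => uMap θ + (h * θ (Sum.inr z)) • psing (a, z))
        (θ (Sum.inr z) • psing (a, z)) 0 := by
      simpa using (((hasDerivAt_id (0 : ℝ)).mul_const (θ (Sum.inr z))).smul_const
        (psing (a, z))).const_add (uMap θ)
    have hfd : HasFDerivAt (Gloss (Noi := Noi) T p astar) DL
        ((fun h : ℝ => uMap θ + (h * θ (Sum.inr z)) • psing (a, z)) 0) := by
      simpa using (hLdiff (uMap θ)).hasFDerivAt
    have hB := hfd.comp_hasDerivAt 0 hline2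
    have heq : (fun h : ℝ => lossLin T p astar (θ + h • EuclideanSpace.single (Sum.inl (a, z)) 1))
        = (Gloss (Noi := Noi) T p astar) ∘
          (fun h : ℝ => uMap θ + (h * θ (Sum.inr z)) • psing (a, z)) := by
      funext h
      simp only [Function.comp_apply]
      rw [lossLin_eq_Gloss, hEq h]
    rw [heq] at hA
    have := hA.unique hB
    rw [this, ContinuousLinearMap.map_smul, smul_eq_mul]
  · intro z
    rw [gradient_coord_s10]
    have hA := hasDerivAt_line_comp (lossLin T p astar) θ
      (EuclideanSpace.single (Sum.inr z) 1) (hF θ)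
    set vz : Ans × Tok Sub Rel Ans Noi → ℝ :=
      fun az' => if az'.2 = z then θ (Sum.inl az') else 0 with hvzdef
    have hEq : ∀ h : ℝ,
        uMap (θ + h • EuclideanSpace.single (Sum.inr z) 1) = uMap θ + h • vz := by
      intro h; funext az'
      obtain ⟨a', z'⟩ := az'
      simp only [uMap, PiLp.add_apply, PiLp.smul_apply, EuclideanSpace.single_apply,
        smul_eq_mul, Pi.add_apply, Pi.smul_apply, hvzdef, Sum.inr.injEq,
        reduceCtorEq, if_false]
      by_cases hz : z' = z
      · subst hz; simp; ring
      · simp [hz]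
    have hline2 : HasDerivAt (fun h : ℝ => uMap θ + h • vz) vz 0 := by
      simpa using ((hasDerivAt_id (0 : ℝ)).smul_const vz).const_add (uMap θ)
    have hfd : HasFDerivAt (Gloss (Noi := Noi) T p astar) DL
        ((fun h : ℝ => uMap θ + h • vz) 0) := by
      simpa using (hLdiff (uMap θ)).hasFDerivAt
    have hB := hfd.comp_hasDerivAt 0 hline2
    have heq : (fun h : ℝ => lossLin T p astar (θ + h • EuclideanSpace.single (Sum.inr z) 1))
        = (Gloss (Noi := Noi) T p astar) ∘ (fun h : ℝ => uMap θ + h • vz) := by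
      funext h
      simp only [Function.comp_apply]
      rw [lossLin_eq_Gloss, hEq h]
    rw [heq] at hA
    have huniq := hA.unique hB
    have hvz : vz = ∑ a : Ans, θ (Sum.inl (a, z)) • psing (a, z) := by
      funext az'
      obtain ⟨a', z'⟩ := az'
      simp only [hvzdef, Finset.sum_apply, Pi.smul_apply, psing, Pi.single_apply, smul_eq_mul,
        Prod.mk.injEq, mul_ite, mul_one, mul_zero]
      by_cases hz : z' = z
      · subst hz
        simp [Finset.sum_ite_eq]
      · simp [hz]
    rw [huniq, hvz, map_sum]
    simp [smul_eq_mul]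
end AuxGF3
theorem WKQ_stays_above_init
    (Sub Rel Ans Noi : Type) [Fintype Sub] [Fintype Rel] [Fintype Ans] [Fintype Noi]
    [DecidableEq Sub] [DecidableEq Rel] [DecidableEq Ans] [DecidableEq Noi]
    (T : ℕ) (p : Sub → Rel → ℝ) (astar : Sub → Rel → Ans)
    (hp0 : ∀ s r, 0 ≤ p s r) (hp1 : (∑ s : Sub, ∑ r : Rel, p s r) = 1)
    (hdisj : ∀ r r' : Rel, r ≠ r' →
      Disjoint (Finset.univ.image fun s => astar s r)
        (Finset.univ.image fun s => astar s r'))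
    (α : ℝ) (hα : 0 < α)
    (θfun : ℝ → Param Sub Rel Ans Noi)
    (hinitOV : ∀ (a : Ans) (z : Tok Sub Rel Ans Noi), WOV (θfun 0) a z = α)
    (hinitKQ : ∀ z : Tok Sub Rel Ans Noi,
      WKQ (θfun 0) z = α * Real.sqrt (Fintype.card Ans + 1))
    (hflow : ∀ t : ℝ,
      HasDerivAt θfun (-(gradient (lossLin T p astar) (θfun t))) t) :
    ∀ (z : Tok Sub Rel Ans Noi) (t : ℝ), 0 ≤ t → α ≤ WKQ (θfun t) z := by
  intro z t ht
  have hcoord : ∀ (i : (Ans × Tok Sub Rel Ans Noi) ⊕ Tok Sub Rel Ans Noi) (τ : ℝ),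
      HasDerivAt (fun u => θfun u i)
        (-(gradient (lossLin T p astar) (θfun τ) i)) τ := by
    intro i τ
    have h := (EuclideanSpace.proj (𝕜 := ℝ) i).hasFDerivAt.comp_hasDerivAt τ (hflow τ)
    simp [PiLp.proj_apply] at h; exact h
  have hsqrt1 : (1 : ℝ) ≤ Real.sqrt (Fintype.card Ans + 1) := by
    rw [Real.one_le_sqrt]
    have := Nat.cast_nonneg (α := ℝ) (Fintype.card Ans)
    linarith
  by_cases hSR : Nonempty Sub ∧ Nonempty Rel
  · -- nondegenerate case: balancedness invariant
    obtain ⟨hS, hR⟩ := hSR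
    have hBderiv : ∀ τ : ℝ, HasDerivAt
        (fun u => (θfun u (Sum.inr z)) ^ 2 - ∑ a : Ans, (θfun u (Sum.inl (a, z))) ^ 2) 0 τ := by
      intro τ
      obtain ⟨g, hg1, hg2⟩ := grad_struct T p astar (θfun τ)
      have hKQ : HasDerivAt (fun u => (θfun u (Sum.inr z)) ^ 2)
          (2 * θfun τ (Sum.inr z) * -(gradient (lossLin T p astar) (θfun τ) (Sum.inr z))) τ := by
        have := (hcoord (Sum.inr z) τ).pow 2
        simp at this ⊢; exact this
      have hOV : HasDerivAt (fun u => ∑ a : Ans, (θfun u (Sum.inl (a, z))) ^ 2)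
          (∑ a : Ans, 2 * θfun τ (Sum.inl (a, z)) *
            -(gradient (lossLin T p astar) (θfun τ) (Sum.inl (a, z)))) τ := by
        apply HasDerivAt.fun_sum
        intro a _
        have := (hcoord (Sum.inl (a, z)) τ).pow 2
        simp at this ⊢; exact this
      have hsub := hKQ.sub hOV
      have hval : (2 * θfun τ (Sum.inr z) * -(gradient (lossLin T p astar) (θfun τ) (Sum.inr z))) -
          (∑ a : Ans, 2 * θfun τ (Sum.inl (a, z)) *
            -(gradient (lossLin T p astar) (θfun τ) (Sum.inl (a, z)))) = 0 := by
        have h1 : ∑ a : Ans, 2 * θfun τ (Sum.inl (a, z)) *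
              -(gradient (lossLin T p astar) (θfun τ) (Sum.inl (a, z)))
            = -(2 * θfun τ (Sum.inr z) * ∑ a : Ans, θfun τ (Sum.inl (a, z)) * g (a, z)) := by
          rw [Finset.mul_sum, ← Finset.sum_neg_distrib]
          exact Finset.sum_congr rfl fun a _ => by rw [hg1]; ring
        rw [hg2, h1]
        ring
      rw [hval] at hsub
      exact hsub
    have hBconst : ∀ τ : ℝ,
        (θfun τ (Sum.inr z)) ^ 2 - ∑ a : Ans, (θfun τ (Sum.inl (a, z))) ^ 2 =
        (θfun 0 (Sum.inr z)) ^ 2 - ∑ a : Ans, (θfun 0 (Sum.inl (a, z))) ^ 2 :=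
      fun τ => is_const_of_deriv_eq_zero (fun x => (hBderiv x).differentiableAt)
        (fun x => (hBderiv x).deriv) τ 0
    have hB0 : (θfun 0 (Sum.inr z)) ^ 2 - ∑ a : Ans, (θfun 0 (Sum.inl (a, z))) ^ 2 = α ^ 2 := by
      have hKQ0 : θfun 0 (Sum.inr z) = α * Real.sqrt (Fintype.card Ans + 1) := hinitKQ z
      have hOV0 : ∀ a : Ans, θfun 0 (Sum.inl (a, z)) = α := fun a => hinitOV a z
      rw [hKQ0]
      rw [Finset.sum_congr rfl fun a _ => by rw [hOV0 a]]
      rw [Finset.sum_const, mul_pow, Real.sq_sqrt (by positivity), nsmul_eq_mul,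
        Finset.card_univ]
      ring
    have hsq : ∀ τ : ℝ, α ^ 2 ≤ (θfun τ (Sum.inr z)) ^ 2 := by
      intro τ
      have h := (hBconst τ).trans hB0
      have hnn : 0 ≤ ∑ a : Ans, (θfun τ (Sum.inl (a, z))) ^ 2 :=
        Finset.sum_nonneg fun a _ => sq_nonneg _
      linarith
    have hcont : Continuous fun τ => θfun τ (Sum.inr z) :=
      Differentiable.continuous fun τ => (hcoord (Sum.inr z) τ).differentiableAt
    have h0 : α ≤ θfun 0 (Sum.inr z) := by
      have h := hinitKQ z
      rw [WKQ] at h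
      rw [h]
      exact le_mul_of_one_le_right hα.le hsqrt1
    by_contra hlt
    push_neg at hlt
    rw [WKQ] at hlt
    have habs : α ≤ |θfun t (Sum.inr z)| := by
      calc α = Real.sqrt (α ^ 2) := (Real.sqrt_sq hα.le).symm
        _ ≤ Real.sqrt ((θfun t (Sum.inr z)) ^ 2) := Real.sqrt_le_sqrt (hsq t)
        _ = |θfun t (Sum.inr z)| := Real.sqrt_sq_eq_abs _
    have hneg : θfun t (Sum.inr z) ≤ -α := by
      rcases abs_cases (θfun t (Sum.inr z)) with ⟨h, _⟩ | ⟨h, _⟩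
      · rw [h] at habs; linarith
      · rw [h] at habs; linarith
    have hmem : (0 : ℝ) ∈ Set.Icc (θfun t (Sum.inr z)) (θfun 0 (Sum.inr z)) :=
      ⟨by linarith, by linarith⟩
    obtain ⟨c, _, hc0⟩ := intermediate_value_Icc' ht hcont.continuousOn hmem
    have hc := hsq c
    have hc0' : θfun c (Sum.inr z) = 0 := hc0
    rw [hc0'] at hc
    nlinarith
  · -- degenerate case: the loss is identically zero, so the flow is constant
    have hloss : lossLin (Noi := Noi) T p astar = fun _ => (0 : ℝ) := by
      funext θ'
      rcases not_and_or.mp hSR with h | h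
      · rw [not_nonempty_iff] at h
        unfold lossLin
        rw [Finset.univ_eq_empty, Finset.sum_empty]
      · rw [not_nonempty_iff] at h
        unfold lossLin
        simp [Finset.univ_eq_empty (α := Rel)]
    have hgrad : ∀ θ' : Param Sub Rel Ans Noi,
        gradient (lossLin T p astar) θ' = 0 := by
      intro θ'; rw [hloss]; exact gradient_const θ' 0
    have hconst : θfun t (Sum.inr z) = θfun 0 (Sum.inr z) := by
      have hd : ∀ τ : ℝ, HasDerivAt (fun u => θfun u (Sum.inr z)) 0 τ := by
        intro τ
        have h := hcoord (Sum.inr z) τ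
        rw [hgrad] at h
        simpa using h
      exact is_const_of_deriv_eq_zero (fun x => (hd x).differentiableAt)
        (fun x => (hd x).deriv) t 0
    rw [WKQ, hconst]
    have h := hinitKQ z
    rw [WKQ] at h
    rw [h]
    exact le_mul_of_one_le_right hα.le hsqrt1
end
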